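/- arXiv:2209.08462 — 4 statements merged into one kernel-verified Lean document; each statement's English description precedes it below -/
import Mathlib

section
/- If L¹, L² are a pair of mutually weak orthogonal Latin squares of order d₁ and K¹, K² are a pair of mutually weak orthogonal Latin squares of order d₂, then the product squares M^m of order d₁d₂ defined on index pairs by M^m((i,s),(j,t)) = (L^m(i,j), K^m(s,t)) for m = 1,2 are Latin squares and are mutually weak orthogonal. -/
/-- A square array (rows/columns indexed by `ι`, symbols in `σ`) is a Latin square if
every row and every column is a bijection onto the symbol set. -/
def IsLatin {ι σ : Type*} (L : ι → ι → σ) : Prop :=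
  (∀ i, Function.Bijective fun j => L i j) ∧ (∀ j, Function.Bijective fun i => L i j)

/-- Two squares are mutually weak orthogonal if any two rows agree in exactly one column. -/
def WeakOrth {ι σ : Type*} (L K : ι → ι → σ) : Prop :=
  ∀ i j, ∃! s, L i s = K j s

theorem ExistsUnique.prod {α β : Type*} {p : α → Prop} {q : β → Prop}
    (hp : ∃! a, p a) (hq : ∃! b, q b) : ∃! x : α × β, p x.1 ∧ q x.2 := by
  obtain ⟨a, ha, ha_uniq⟩ := hp
  obtain ⟨b, hb, hb_uniq⟩ := hq
  exact ⟨(a, b), ⟨ha, hb⟩, fun x hx => Prod.ext (ha_uniq x.1 hx.1) (hb_uniq x.2 hx.2)⟩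

def latinProd {ι κ σ τ : Type*} (L : ι → ι → σ) (K : κ → κ → τ) :
    ι × κ → ι × κ → σ × τ :=
  fun p q => (L p.1 q.1, K p.2 q.2)

theorem IsLatin.prod {ι κ σ τ : Type*} {L : ι → ι → σ} {K : κ → κ → τ}
    (hL : IsLatin L) (hK : IsLatin K) : IsLatin (latinProd L K) :=
  ⟨fun p => (hL.1 p.1).prodMap (hK.1 p.2), fun q => (hL.2 q.1).prodMap (hK.2 q.2)⟩

theorem WeakOrth.prod {ι κ σ τ : Type*} {L₁ L₂ : ι → ι → σ} {K₁ K₂ : κ → κ → τ}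
    (hL : WeakOrth L₁ L₂) (hK : WeakOrth K₁ K₂) :
    WeakOrth (latinProd L₁ K₁) (latinProd L₂ K₂) := fun p q => by
  simpa only [latinProd, Prod.mk.injEq] using (hL p.1 q.1).prod (hK p.2 q.2)

/-- The direct products of a pair of MWOLS of order `d₁` with a pair of
MWOLS of order `d₂` are Latin squares of order `d₁d₂` that are mutually weak orthogonal. -/
theorem product_mwols {d₁ d₂ : ℕ}
    (L₁ L₂ : Fin d₁ → Fin d₁ → Fin d₁) (K₁ K₂ : Fin d₂ → Fin d₂ → Fin d₂)
    (hL₁ : IsLatin L₁) (hL₂ : IsLatin L₂) (hK₁ : IsLatin K₁) (hK₂ : IsLatin K₂)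
    (hLw : WeakOrth L₁ L₂) (hKw : WeakOrth K₁ K₂) :
    IsLatin (fun (p q : Fin d₁ × Fin d₂) => (L₁ p.1 q.1, K₁ p.2 q.2)) ∧
    IsLatin (fun (p q : Fin d₁ × Fin d₂) => (L₂ p.1 q.1, K₂ p.2 q.2)) ∧
    WeakOrth (fun (p q : Fin d₁ × Fin d₂) => (L₁ p.1 q.1, K₁ p.2 q.2))
      (fun (p q : Fin d₁ × Fin d₂) => (L₂ p.1 q.1, K₂ p.2 q.2)) :=
  ⟨hL₁.prod hK₁, hL₂.prod hK₂, hLw.prod hKw⟩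
end

section
/- Let L¹ be a Latin square of order d whose cells can be partitioned into d disjoint transversals. Define L² to be the d×d square whose k-th row is the transversal containing the cell (k,0) of L¹, listed by column (i.e., L²(k,j) = L¹(i_j, j) where the cells (i_j, j), j = 0,…,d−1, form the transversal through (k,0)). Then L² is a Latin square, and L¹ and L² are mutually weak orthogonal. -/
def transversalSquare {ι σ : Type*} (L : ι → ι → σ) (T : ι → ι → ι) : ι → ι → σ :=
  fun k j => L (T k j) j

section TransversalSquare

variable {ι σ : Type*} {L : ι → ι → σ} {T : ι → ι → ι}

theorem isLatin_transversalSquare (hL : ∀ j, Function.Bijective fun i => L i j)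
    (hTsym : ∀ k, Function.Bijective fun j => L (T k j) j)
    (hTpart : ∀ j, Function.Bijective fun k => T k j) :
    IsLatin (transversalSquare L T) :=
  ⟨hTsym, fun j => (hL j).comp (hTpart j)⟩

theorem weakOrth_transversalSquare (hL : ∀ j, Function.Injective fun i => L i j)
    (hTrow : ∀ k, Function.Bijective (T k)) :
    WeakOrth L (transversalSquare L T) := by
  intro i k
  obtain ⟨s, hs⟩ := (hTrow k).2 i
  refine ⟨s, by simp only [transversalSquare, hs], fun t ht => (hTrow k).1 ?_⟩
  rw [hs]
  exact (hL t ht).symm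

end TransversalSquare

theorem weak_orth_of_transversal_resolution_general {d : ℕ}
    (L : Fin d → Fin d → Fin d) (hL : IsLatin L)
    (T : Fin d → Fin d → Fin d)
    (hTrow : ∀ k, Function.Bijective (T k))
    (hTsym : ∀ k, Function.Bijective fun j => L (T k j) j)
    (hTpart : ∀ j, Function.Bijective fun k => T k j) :
    IsLatin (fun k j => L (T k j) j) ∧ WeakOrth L (fun k j => L (T k j) j) :=
  ⟨isLatin_transversalSquare hL.2 hTsym hTpart,
    weakOrth_transversalSquare (fun j => (hL.2 j).injective) hTrow⟩

/-- If a Latin square `L` of order `d` (with `L(i,0) = i`) has a resolution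
into `d` disjoint transversals, encoded by `T` where the `k`-th transversal consists of
the cells `(T k j, j)` and passes through `(k,0)`, then the square
`L²(k,j) = L(T k j, j)` is a Latin square and `L, L²` are mutually weak orthogonal. -/
theorem weak_orth_of_transversal_resolution {d : ℕ} [NeZero d]
    (L : Fin d → Fin d → Fin d) (hL : IsLatin L) (h0 : ∀ i, L i 0 = i)
    (T : Fin d → Fin d → Fin d)
    (hTrow : ∀ k, Function.Bijective (T k))
    (hTsym : ∀ k, Function.Bijective fun j => L (T k j) j)
    (hTpart : ∀ j, Function.Bijective fun k => T k j)
    (hT0 : ∀ k, T k 0 = k) :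
    IsLatin (fun k j => L (T k j) j) ∧ WeakOrth L (fun k j => L (T k j) j) :=
  weak_orth_of_transversal_resolution_general L hL T hTrow hTsym hTpart
end

section
/- Let d ≥ 1, ω = exp(2πi/d), and let L be a Latin square of order d on Z_d. For n, m ∈ Z_d and l ∈ Z_d, define the unit vectors in C^d ⊗ C^d ⊗ C^d by |φ_{n,m,l}⟩ = (1/d) Σ_{k∈Z_d} ω^{nk} |k⟩ ⊗ Σ_{i∈Z_d} ω^{mi} |i⟩ ⊗ |j(i, k+l)⟩, where j(i,s) is the unique column such that L(i, j(i,s)) = s. Then the d³ vectors {|φ_{n,m,l}⟩ : n,m,l ∈ Z_d} form an orthonormal basis of C^d ⊗ C^d ⊗ C^d. -/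
/-!
Writing `ψ = ZMod.stdAddChar`, the coefficient of `φ_{n,m,l}` at `(k,i,j)` is
`d⁻¹ ψ(nk) ψ(mi) [L(i,j) = k+l]`. In `⟪φ_{n,m,l}, φ_{n',m',l'}⟫` the sum over `j` is
`[l = l']`, because each row of `L` hits every symbol exactly once; the sums over `k` and `i`
are then character sums `∑ₓ ψ(x(n'-n)) = d [n = n']`, so the Gram matrix is the identity.
Orthonormality gives linear independence, and `d³` independent vectors span.
-/

open Complex

/-- The AMEB vector `|φ_{n,m,l}⟩` built from a Latin square `L` on `Z_d`:
its component at the standard basis vector `|k⟩⊗|i⟩⊗|j⟩` is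
`(1/d)·ω^{nk}·ω^{mi}·[L(i,j) = k+l]`, i.e. the third factor is `|j(i,k+l)⟩`. -/
noncomputable def phiVec (d : ℕ) [NeZero d] (L : ZMod d → ZMod d → ZMod d)
    (nml : ZMod d × ZMod d × ZMod d) : EuclideanSpace ℂ (ZMod d × ZMod d × ZMod d) :=
  WithLp.toLp 2 fun kij =>
    (d : ℂ)⁻¹ * Complex.exp (2 * Real.pi * Complex.I / d) ^ (nml.1.val * kij.1.val) *
      Complex.exp (2 * Real.pi * Complex.I / d) ^ (nml.2.1.val * kij.2.1.val) *
      (if L kij.2.1 kij.2.2 = kij.1 + nml.2.2 then 1 else 0)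

open ZMod (stdAddChar)
open ComplexConjugate

lemma exp_two_pi_I_div_pow_eq_stdAddChar (d : ℕ) [NeZero d] (n : ℕ) :
    exp (2 * Real.pi * I / d) ^ n = stdAddChar (n : ZMod d) := by
  rw [ZMod.stdAddChar_apply, ZMod.toCircle_natCast, ← exp_nat_mul]
  ring_nf

lemma phiVec_apply (d : ℕ) [NeZero d] (L : ZMod d → ZMod d → ZMod d) (n m l k i j : ZMod d) :
    phiVec d L (n, m, l) (k, i, j) =
      (d : ℂ)⁻¹ * stdAddChar (n * k) * stdAddChar (m * i) *
        (if L i j = k + l then 1 else 0) := by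
  simp only [phiVec, PiLp.toLp_apply, exp_two_pi_I_div_pow_eq_stdAddChar, Nat.cast_mul,
    ZMod.natCast_val, ZMod.cast_id', id]

lemma sum_ite_eq_mul_ite_eq_of_bijective {α β R : Type*} [Fintype α] [Fintype β] [DecidableEq β]
    [Semiring R] {f : α → β} (hf : Function.Bijective f) (b c : β) :
    ∑ a, (if f a = b then (1 : R) else 0) * (if f a = c then 1 else 0) =
      if b = c then 1 else 0 := by
  rw [Fintype.sum_bijective f hf _ (fun s => (if s = b then (1 : R) else 0) * if s = c then 1 else 0)
    fun _ => rfl]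
  simp [eq_comm]

lemma sum_stdAddChar_mul (d : ℕ) [NeZero d] (a : ZMod d) :
    ∑ x : ZMod d, stdAddChar (x * a) = if a = 0 then (d : ℂ) else 0 := by
  simpa using AddChar.sum_mulShift (R' := ℂ) a (ZMod.isPrimitive_stdAddChar d)

section

variable (d : ℕ) [NeZero d] (L : ZMod d → ZMod d → ZMod d)

lemma conj_phiVec_mul_phiVec (n m l n' m' l' k i j : ZMod d) :
    conj (phiVec d L (n, m, l) (k, i, j)) * phiVec d L (n', m', l') (k, i, j) =
      (d : ℂ)⁻¹ * (d : ℂ)⁻¹ * (stdAddChar (k * (n' - n)) * (stdAddChar (i * (m' - m)) *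
        ((if L i j = k + l then 1 else 0) * (if L i j = k + l' then 1 else 0)))) := by
  have hk : stdAddChar (k * (n' - n)) = conj (stdAddChar (n * k)) * stdAddChar (n' * k) := by
    rw [← AddChar.map_neg_eq_conj, ← AddChar.map_add_eq_mul]; ring_nf
  have hi : stdAddChar (i * (m' - m)) = conj (stdAddChar (m * i)) * stdAddChar (m' * i) := by
    rw [← AddChar.map_neg_eq_conj, ← AddChar.map_add_eq_mul]; ring_nf
  simp only [phiVec_apply, hk, hi, map_mul, map_inv₀, map_natCast, apply_ite conj, map_one,
    map_zero]
  ring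

lemma inner_phiVec (hrow : ∀ i, Function.Bijective (L i)) (a b : ZMod d × ZMod d × ZMod d) :
    inner ℂ (phiVec d L a) (phiVec d L b) = if a = b then 1 else 0 := by
  obtain ⟨n, m, l⟩ := a
  obtain ⟨n', m', l'⟩ := b
  simp only [PiLp.inner_apply, RCLike.inner_apply', Fintype.sum_prod_type,
    conj_phiVec_mul_phiVec, ← Finset.mul_sum, sum_ite_eq_mul_ite_eq_of_bijective (hrow _),
    add_right_inj, ← Finset.sum_mul, sum_stdAddChar_mul, sub_eq_zero, Prod.ext_iff]
  have hd : (d : ℂ) ≠ 0 := NeZero.ne _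
  split_ifs <;> simp_all
  field_simp

lemma orthonormal_phiVec (hrow : ∀ i, Function.Bijective (L i)) :
    Orthonormal ℂ (phiVec d L) :=
  orthonormal_iff_ite.2 (inner_phiVec d L hrow)

end

theorem phiVec_orthonormal_basis_general (d : ℕ) [NeZero d] (L : ZMod d → ZMod d → ZMod d)
    (hrow : ∀ i, Function.Bijective (L i)) :
    Orthonormal ℂ (phiVec d L) ∧
      Submodule.span ℂ (Set.range (phiVec d L)) = ⊤ := by
  have h := orthonormal_phiVec d L hrow
  refine ⟨h, h.linearIndependent.span_eq_top_of_card_eq_finrank ?_⟩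
  simp [finrank_euclideanSpace]

/-- For a Latin square `L` of order `d ≥ 1` on `Z_d`, the `d³` vectors
`|φ_{n,m,l}⟩` form an orthonormal basis of `C^d ⊗ C^d ⊗ C^d`. -/
theorem phiVec_orthonormal_basis (d : ℕ) [NeZero d] (L : ZMod d → ZMod d → ZMod d)
    (hrow : ∀ i, Function.Bijective (L i))
    (hcol : ∀ j, Function.Bijective fun i => L i j) :
    Orthonormal ℂ (phiVec d L) ∧
      Submodule.span ℂ (Set.range (phiVec d L)) = ⊤ :=
  phiVec_orthonormal_basis_general d L hrow
end

section
/- For q a prime power with q ≥ 3, there exist q−1 Latin squares of order q that are simultaneously pairwise mutually orthogonal and pairwise mutually weak orthogonal, namely the squares L_c(i,j) = i + c·j over F_q for c ∈ F_q \ {0}. -/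
/-!
The squares `L_c(i, j) = i + c j` are affine in both coordinates: a cell of `L_c` and a cell of
`L_{c'}` in the same column `j` agree exactly when `(c - c') j` equals a prescribed difference,
which has a unique solution as soon as `c ≠ c'`.
-/

def IsOrthogonal {ι σ : Type*} (L K : ι → ι → σ) : Prop :=
  Function.Bijective fun p : ι × ι => (L p.1 p.2, K p.1 p.2)

def IsWeakOrthogonal {ι σ : Type*} (L K : ι → ι → σ) : Prop :=
  ∀ i i' : ι, ∃! j : ι, L i j = K i' j

section AddMulSquares

variable {K : Type*} [Field K]

theorem isLatin_add_mul {c : K} (hc : c ≠ 0) : IsLatin fun i j : K => i + c * j :=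
  ⟨fun i => (Equiv.addLeft i).bijective.comp (Equiv.mulLeft₀ c hc).bijective,
    fun j => (Equiv.addRight (c * j)).bijective⟩

theorem add_mul_eq_add_mul_iff (i i' c c' j : K) :
    i + c * j = i' + c' * j ↔ (c - c') * j = i' - i := by
  constructor <;> intro h <;> linear_combination h

theorem isWeakOrthogonal_add_mul {c c' : K} (hne : c ≠ c') :
    IsWeakOrthogonal (fun i j : K => i + c * j) (fun i j => i + c' * j) := fun i i' => by
  simp only [add_mul_eq_add_mul_iff]
  exact (Equiv.mulLeft₀ (c - c') (sub_ne_zero.mpr hne)).bijective.existsUnique (i' - i)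

theorem isOrthogonal_add_mul {c c' : K} (hne : c ≠ c') :
    IsOrthogonal (fun i j : K => i + c * j) (fun i j => i + c' * j) := by
  have hd : c - c' ≠ 0 := sub_ne_zero.mpr hne
  constructor
  · rintro ⟨a, b⟩ ⟨a', b'⟩ h
    obtain ⟨h₁, h₂⟩ := Prod.mk.inj h
    have hb : b = b' := mul_left_cancel₀ hd (by linear_combination h₁ - h₂)
    subst hb
    simpa using h₁
  · rintro ⟨x, y⟩
    set b := (c - c')⁻¹ * (x - y)
    have hb : (c - c') * b = x - y := mul_inv_cancel_left₀ hd _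
    exact ⟨(x - c * b, b), Prod.ext (by simp) (by linear_combination -hb)⟩

end AddMulSquares

theorem field_squares_mols_and_mwols_general (q : ℕ)
    (F : Type*) [Field F] [Fintype F] [DecidableEq F] (hF : Fintype.card F = q) :
    Fintype.card {c : F // c ≠ 0} = q - 1 ∧
    (∀ c : F, c ≠ 0 → IsLatin fun i j : F => i + c * j) ∧
    (∀ c c' : F, c ≠ 0 → c' ≠ 0 → c ≠ c' →
      (Function.Bijective fun p : F × F => (p.1 + c * p.2, p.1 + c' * p.2)) ∧
      ∀ i i' : F, ∃! j : F, i + c * j = i' + c' * j) :=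
  ⟨by simp [Fintype.card_subtype_compl, hF], fun _ hc => isLatin_add_mul hc,
    fun _ _ _ _ hne => ⟨isOrthogonal_add_mul hne, isWeakOrthogonal_add_mul hne⟩⟩

/-- For a prime power `q ≥ 3`, the `q−1` squares `L_c(i,j) = i + c·j`
over the field `F` with `q` elements (one for each nonzero `c`) are Latin squares that
are simultaneously pairwise mutually orthogonal and pairwise mutually weak orthogonal. -/
theorem field_squares_mols_and_mwols (q : ℕ) (hq : IsPrimePow q) (hq3 : 3 ≤ q)
    (F : Type*) [Field F] [Fintype F] [DecidableEq F] (hF : Fintype.card F = q) :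
    Fintype.card {c : F // c ≠ 0} = q - 1 ∧
    (∀ c : F, c ≠ 0 → IsLatin fun i j : F => i + c * j) ∧
    (∀ c c' : F, c ≠ 0 → c' ≠ 0 → c ≠ c' →
      (Function.Bijective fun p : F × F => (p.1 + c * p.2, p.1 + c' * p.2)) ∧
      ∀ i i' : F, ∃! j : F, i + c * j = i' + c' * j) :=
  field_squares_mols_and_mwols_general q F hF
end
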